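/- Let E be a diagonal 0-1 projection and M symmetric. If the restriction of M to the coordinates where E_{ii}=1 is positive definite, then lim_{ε→0⁺} E (E M E + ε I)⁻¹ E exists and equals the pseudoinverse of E M E restricted to the range of E; in particular lim_{ε→0⁺} Jᵀ E (E M E + ε I)⁻¹ E J = Jᵀ_S (M_S)⁻¹ J_S where S = {i : E_{ii}=1} and M_S is the principal submatrix of M on S. -/

import Mathlib

/-!
Let `R` be the matrix that restricts vectors to `S`, so that `E = Rᵀ R` and `R Rᵀ = 1`. Then
`E M E + ε I = Rᵀ M_S R + ε I` maps the range of `Rᵀ` to itself and acts there as `M_S + ε I`: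
`(Rᵀ M_S R + ε I) Rᵀ = Rᵀ (M_S + ε I)`. For `ε > 0` both matrices are positive definite, hence
`R (E M E + ε I)⁻¹ Rᵀ = (M_S + ε I)⁻¹`, and the quadratic form equals `J_Sᵀ (M_S + ε I)⁻¹ J_S`,
which is continuous at `ε = 0` because `M_S` is invertible.
-/

open Matrix Filter Set

namespace Matrix

theorem dotProduct_transpose_mul_mul_mulVec {m n K : Type*} [Fintype m] [Fintype n] [CommRing K]
    (R : Matrix m n K) (X : Matrix m m K) (v : n → K) :
    v ⬝ᵥ (Rᵀ * X * R) *ᵥ v = (R *ᵥ v) ⬝ᵥ X *ᵥ (R *ᵥ v) := by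
  rw [← mulVec_mulVec, ← mulVec_mulVec, dotProduct_mulVec, vecMul_transpose]

section Compression

variable {m n K : Type*} [Fintype m] [Fintype n] [DecidableEq m] [DecidableEq n] [CommRing K]
  {R : Matrix m n K}

theorem transpose_mul_mul_add_smul_one_mul_transpose (hR : R * Rᵀ = 1) (B : Matrix m m K)
    (c : K) : (Rᵀ * B * R + c • 1) * Rᵀ = Rᵀ * (B + c • 1) := by
  rw [Matrix.add_mul, Matrix.mul_assoc, hR, Matrix.mul_one, Matrix.smul_mul, Matrix.one_mul,
    Matrix.mul_add, Matrix.mul_smul, Matrix.mul_one]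

theorem mul_inv_transpose_mul_mul_add_smul_one_mul_transpose (hR : R * Rᵀ = 1)
    (B : Matrix m m K) (c : K) (hA : IsUnit (Rᵀ * B * R + c • 1)) (hB : IsUnit (B + c • 1)) :
    R * (Rᵀ * B * R + c • 1)⁻¹ * Rᵀ = (B + c • 1)⁻¹ := by
  set A := Rᵀ * B * R + c • 1
  have hA' := (isUnit_iff_isUnit_det _).mp hA
  have hB' := (isUnit_iff_isUnit_det _).mp hB
  have h : A⁻¹ * Rᵀ = Rᵀ * (B + c • 1)⁻¹ :=
    calc A⁻¹ * Rᵀ = A⁻¹ * (A * Rᵀ) * (B + c • 1)⁻¹ := by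
          rw [transpose_mul_mul_add_smul_one_mul_transpose hR, Matrix.mul_assoc A⁻¹,
            Matrix.mul_assoc Rᵀ, mul_nonsing_inv _ hB', Matrix.mul_one]
      _ = Rᵀ * (B + c • 1)⁻¹ := by rw [← Matrix.mul_assoc, nonsing_inv_mul _ hA', Matrix.one_mul]
  rw [Matrix.mul_assoc, h, ← Matrix.mul_assoc, hR, Matrix.one_mul]

theorem dotProduct_mulVec_inv_transpose_mul_mul_add_smul_one_mulVec (hR : R * Rᵀ = 1)
    (B : Matrix m m K) (c : K) (hA : IsUnit (Rᵀ * B * R + c • 1)) (hB : IsUnit (B + c • 1))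
    (v : n → K) :
    v ⬝ᵥ (Rᵀ * R) *ᵥ ((Rᵀ * B * R + c • 1)⁻¹ *ᵥ ((Rᵀ * R) *ᵥ v)) =
      (R *ᵥ v) ⬝ᵥ (B + c • 1)⁻¹ *ᵥ (R *ᵥ v) := by
  rw [mulVec_mulVec, mulVec_mulVec,
    show Rᵀ * R * (Rᵀ * B * R + c • 1)⁻¹ * (Rᵀ * R) = Rᵀ * (R * (Rᵀ * B * R + c • 1)⁻¹ * Rᵀ) * R
      by simp only [Matrix.mul_assoc],
    dotProduct_transpose_mul_mul_mulVec, mul_inv_transpose_mul_mul_add_smul_one_mul_transpose hR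
      _ _ hA hB]

end Compression

theorem PosSemidef.posDef_transpose_mul_mul_add_smul_one {m n : Type*} [Fintype m] [Fintype n]
    [DecidableEq n] {B : Matrix m m ℝ} (hB : B.PosSemidef) (R : Matrix m n ℝ) {ε : ℝ}
    (hε : 0 < ε) : (Rᵀ * B * R + ε • 1).PosDef := by
  rw [← conjTranspose_eq_transpose_of_trivial]
  exact PosDef.posSemidef_add (hB.conjTranspose_mul_mul_same R) (PosDef.one.smul hε)

theorem tendsto_inv_add_smul_one {n 𝕜 : Type*} [Fintype n] [DecidableEq n] [NormedField 𝕜]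
    {A : Matrix n n 𝕜} (hA : IsUnit A) :
    Tendsto (fun c : 𝕜 => (A + c • 1)⁻¹) (nhds 0) (nhds A⁻¹) := by
  have hinv : ContinuousAt Inv.inv A := continuousAt_matrix_inv A (by
    rw [Ring.inverse_eq_inv']
    exact continuousAt_inv₀ ((isUnit_iff_isUnit_det A).mp hA).ne_zero)
  have hshift : ContinuousAt (fun c : 𝕜 => A + c • (1 : Matrix n n 𝕜)) 0 := by fun_prop
  simpa [Function.comp_def] using (hinv.comp_of_eq hshift (by simp)).tendsto

section Restriction

variable {n : Type*} [Fintype n] [DecidableEq n] (K : Type*) [CommRing K] (p : n → Prop)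

def restriction : Matrix {i // p i} n K := (1 : Matrix n n K).submatrix Subtype.val id

theorem restriction_mul {l : Type*} (M : Matrix n l K) :
    restriction K p * M = M.submatrix Subtype.val id := by
  ext i j
  simp [restriction, mul_apply, one_apply]

theorem mul_transpose_restriction {l : Type*} (M : Matrix l n K) :
    M * (restriction K p)ᵀ = M.submatrix id Subtype.val := by
  ext i j
  simp [restriction, mul_apply, one_apply]

theorem restriction_mul_mul_transpose (M : Matrix n n K) :
    restriction K p * M * (restriction K p)ᵀ = M.submatrix Subtype.val Subtype.val := by
  rw [restriction_mul, mul_transpose_restriction, submatrix_submatrix]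
  rfl

theorem restriction_mul_transpose : restriction K p * (restriction K p)ᵀ = 1 := by
  rw [restriction_mul, restriction, transpose_submatrix, transpose_one, submatrix_submatrix]
  exact submatrix_one _ Subtype.val_injective

theorem restriction_mulVec (v : n → K) : restriction K p *ᵥ v = v ∘ Subtype.val := by
  ext i
  simp [restriction, mulVec, dotProduct, one_apply]

theorem transpose_restriction_mul [DecidablePred p] :
    (restriction K p)ᵀ * restriction K p = diagonal fun i => if p i then 1 else 0 := by
  ext i j
  simp only [mul_apply, transpose_apply, restriction, submatrix_apply, id_eq, one_apply]
  rw [← Finset.sum_subtype (Finset.univ.filter p) (by simp)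
    fun k => (if k = i then (1 : K) else 0) * if k = j then 1 else 0, Finset.sum_filter,
    Fintype.sum_eq_single j fun k hk => by simp [hk]]
  by_cases hij : i = j <;> simp [hij, Ne.symm]

end Restriction

end Matrix

theorem erased_resolvent_limit_general (N : ℕ)
    (d : Fin N → ℝ) (hd : ∀ i, d i = 0 ∨ d i = 1)
    (E : Matrix (Fin N) (Fin N) ℝ) (hE : E = Matrix.diagonal d)
    (M : Matrix (Fin N) (Fin N) ℝ)
    (MS : Matrix {i : Fin N // d i = 1} {i : Fin N // d i = 1} ℝ)
    (hMS : MS = M.submatrix (fun i => i.1) (fun i => i.1))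
    (hMSpos : MS.PosDef)
    (J : Fin N → ℝ) (hJ : ∀ i, J i = 1) :
    Tendsto
      (fun ε : ℝ => J ⬝ᵥ E.mulVec
        (((E * M * E + ε • (1 : Matrix (Fin N) (Fin N) ℝ))⁻¹).mulVec (E.mulVec J)))
      (nhdsWithin 0 (Set.Ioi 0))
      (nhds ((fun _ : {i : Fin N // d i = 1} => (1 : ℝ)) ⬝ᵥ
        (MS⁻¹).mulVec (fun _ => 1))) := by
  set R := restriction ℝ fun i => d i = 1
  have hR : R * Rᵀ = 1 := restriction_mul_transpose ..
  have hE' : E = Rᵀ * R := by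
    rw [hE, transpose_restriction_mul]
    congr 1
    funext i
    rcases hd i with h | h <;> simp [h]
  have hMS' : MS = R * M * Rᵀ := hMS.trans (restriction_mul_mul_transpose ..).symm
  have hEME : E * M * E = Rᵀ * MS * R := by
    rw [hE', hMS']
    simp only [Matrix.mul_assoc]
  have hRJ : R *ᵥ J = fun _ => 1 := by
    rw [restriction_mulVec]
    exact funext fun i => hJ i
  have hlim : Tendsto (fun ε : ℝ => (fun _ => 1) ⬝ᵥ (MS + ε • 1)⁻¹ *ᵥ fun _ => 1)
      (nhdsWithin 0 (Ioi 0)) (nhds ((fun _ => 1) ⬝ᵥ MS⁻¹ *ᵥ fun _ => 1)) :=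
    ((continuous_const.dotProduct (continuous_id.matrix_mulVec continuous_const)).tendsto _).comp
      ((tendsto_inv_add_smul_one hMSpos.isUnit).mono_left nhdsWithin_le_nhds)
  refine hlim.congr' ?_
  filter_upwards [self_mem_nhdsWithin] with ε (hε : 0 < ε)
  rw [hEME, hE', dotProduct_mulVec_inv_transpose_mul_mul_add_smul_one_mulVec hR _ _
    (hMSpos.posSemidef.posDef_transpose_mul_mul_add_smul_one R hε).isUnit
    (hMSpos.add (PosDef.one.smul hε)).isUnit, hRJ]

/-- Let `E = diagonal d` be a 0-1 projection, `M` symmetric, and suppose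
the principal submatrix `M_S` of `M` on `S = {i : d i = 1}` is positive definite. Then
`lim_{ε→0⁺} Jᵀ E (E M E + ε I)⁻¹ E J = Jᵀ_S (M_S)⁻¹ J_S`. -/
theorem erased_resolvent_limit (N : ℕ)
    (d : Fin N → ℝ) (hd : ∀ i, d i = 0 ∨ d i = 1)
    (E : Matrix (Fin N) (Fin N) ℝ) (hE : E = Matrix.diagonal d)
    (M : Matrix (Fin N) (Fin N) ℝ) (hMsymm : M.IsSymm)
    (MS : Matrix {i : Fin N // d i = 1} {i : Fin N // d i = 1} ℝ)
    (hMS : MS = M.submatrix (fun i => i.1) (fun i => i.1))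
    (hMSpos : MS.PosDef)
    (J : Fin N → ℝ) (hJ : ∀ i, J i = 1) :
    Tendsto
      (fun ε : ℝ => J ⬝ᵥ E.mulVec
        (((E * M * E + ε • (1 : Matrix (Fin N) (Fin N) ℝ))⁻¹).mulVec (E.mulVec J)))
      (nhdsWithin 0 (Set.Ioi 0))
      (nhds ((fun _ : {i : Fin N // d i = 1} => (1 : ℝ)) ⬝ᵥ
        (MS⁻¹).mulVec (fun _ => 1))) :=
  erased_resolvent_limit_general N d hd E hE M MS hMS hMSpos J hJ
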